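/- arXiv:1208.1897 — 2 statements merged into one kernel-verified Lean document; each statement's English description precedes it below -/
import Mathlib

section
/- G(V) is bipartite if and only if either V has a composition series of length at most 2, or V has a composition series of length 3 and a unique maximal R-submodule. -/
/-- The vertices of the intersection graph: proper submodules of `V`. -/
def ProperSubmodule (R V : Type*) [Ring R] [AddCommGroup V] [Module R V] :=
  {W : Submodule R V // W ≠ ⊥ ∧ W ≠ ⊤}

/-- The intersection graph of proper submodules of `V`: two distinct proper
submodules are adjacent iff their intersection is nonzero. -/
def intersectionGraph (R V : Type*) [Ring R] [AddCommGroup V] [Module R V] :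
    SimpleGraph (ProperSubmodule R V) where
  Adj U W := U ≠ W ∧ U.1 ⊓ W.1 ≠ ⊥
  symm := by
    refine ⟨?_⟩
    intro U W h
    exact ⟨h.1.symm, by rw [inf_comm]; exact h.2⟩
  loopless := ⟨fun U h => h.1 rfl⟩

/-- `V` has a composition series (from `⊥` to `⊤`) of length `n`. -/
def HasCompositionSeriesOfLength (R V : Type*) [Ring R] [AddCommGroup V] [Module R V]
    (n : ℕ) : Prop :=
  ∃ s : RelSeries {p : Submodule R V × Submodule R V | p.1 ⋖ p.2},
    s.head = ⊥ ∧ s.last = ⊤ ∧ s.length = n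

/-!
By Jordan–Hölder, `V` has a composition series of length `n` iff `Module.length R V = n`.
A chain `A < B < C` of proper submodules is a triangle in `G(V)`, and so is `U, W, U ⊓ W` for
incomparable `U, W` with `U ⊓ W ≠ 0`. Hence a bipartite `G(V)` forces length at most `3`, and in
length `3` two distinct maximal submodules `M, N` cannot exist: `M ⊓ N` is maximal in `M` by
modularity, so either `M ⊓ N = 0` and `0 ⋖ M ⋖ V` is a composition series of length `2`, or `M`
and `N` meet without being comparable.

Conversely, in length at most `2` the graph has no edges at all, and in length `3` with a unique
maximal submodule `M` every other proper submodule lies below `M`, hence is simple; distinct simple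
submodules meet in `0`, so `{M}` and its complement form a bipartition.
-/

open Order SimpleGraph

section

variable {R V : Type*} [Ring R] [AddCommGroup V] [Module R V]

theorem hasCompositionSeriesOfLength_iff {n : ℕ} :
    HasCompositionSeriesOfLength R V n ↔ Module.length R V = n := by
  constructor
  · rintro ⟨s, hhead, hlast, rfl⟩
    exact (Module.length_compositionSeries s hhead hlast).symm
  · intro hn
    obtain ⟨s, hhead, hlast⟩ := isFiniteLength_iff_exists_compositionSeries.mp
      (Module.length_ne_top_iff.mp (hn ▸ ENat.natCast_ne_top n))
    exact ⟨s, hhead, hlast, by exact_mod_cast (Module.length_compositionSeries s hhead hlast).trans hn⟩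

theorem hasCompositionSeriesOfLength_of_isChain {l : List (Submodule R V)}
    (hl : (⊥ :: l ++ [⊤]).IsChain (· ⋖ ·)) :
    HasCompositionSeriesOfLength R V (l.length + 1) :=
  ⟨RelSeries.fromListIsChain _ (by simp) hl, by simp, by rw [← RelSeries.getLast_toList]; simp,
    by simp⟩

theorem le_length_of_isChain {l : List (Submodule R V)}
    (hl : (⊥ :: l ++ [⊤]).IsChain (· < ·)) :
    ((l.length + 1 : ℕ) : ℕ∞) ≤ Module.length R V := by
  rw [Module.length_eq_height]
  simpa using length_le_height (p := RelSeries.fromListIsChain _ (by simp) hl) le_top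

theorem isNoetherian_of_length_ne_top (h : Module.length R V ≠ ⊤) : IsNoetherian R V :=
  (isFiniteLength_iff_isNoetherian_isArtinian.mp (Module.length_ne_top_iff.mp h)).1

theorem intersectionGraph_adj {U W : ProperSubmodule R V} :
    (intersectionGraph R V).Adj U W ↔ U.1 ≠ W.1 ∧ U.1 ⊓ W.1 ≠ ⊥ :=
  and_congr_left' Subtype.ext_iff.not

theorem not_colorable_two_of_triangle {A B C : Submodule R V}
    (hA : A ≠ ⊤) (hB : B ≠ ⊤) (hC : C ≠ ⊤) (hAB : A ≠ B) (hAC : A ≠ C) (hBC : B ≠ C)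
    (hAB' : A ⊓ B ≠ ⊥) (hAC' : A ⊓ C ≠ ⊥) (hBC' : B ⊓ C ≠ ⊥) :
    ¬ (intersectionGraph R V).Colorable 2 := by
  have hA₀ : A ≠ ⊥ := by rintro rfl; simp at hAB'
  have hB₀ : B ≠ ⊥ := by rintro rfl; simp at hAB'
  have hC₀ : C ≠ ⊥ := by rintro rfl; simp at hAC'
  classical
  exact fun hc => hc.cliqueFree (by norm_num : 2 < 3)
    ({⟨A, hA₀, hA⟩, ⟨B, hB₀, hB⟩, ⟨C, hC₀, hC⟩} : Finset (ProperSubmodule R V))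
    (is3Clique_triple_iff.mpr ⟨intersectionGraph_adj.mpr ⟨hAB, hAB'⟩,
      intersectionGraph_adj.mpr ⟨hAC, hAC'⟩, intersectionGraph_adj.mpr ⟨hBC, hBC'⟩⟩)

theorem not_colorable_two_of_lt_of_lt {A B C : Submodule R V} (hA : ⊥ < A) (hAB : A < B)
    (hBC : B < C) (hC : C < ⊤) : ¬ (intersectionGraph R V).Colorable 2 := by
  refine not_colorable_two_of_triangle (hAB.trans (hBC.trans hC)).ne (hBC.trans hC).ne hC.ne
    hAB.ne (hAB.trans hBC).ne hBC.ne ?_ ?_ ?_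
  · rw [inf_eq_left.mpr hAB.le]; exact hA.ne'
  · rw [inf_eq_left.mpr (hAB.trans hBC).le]; exact hA.ne'
  · rw [inf_eq_left.mpr hBC.le]; exact (hA.trans hAB).ne'

theorem le_or_le_of_colorable_two (hc : (intersectionGraph R V).Colorable 2)
    {U W : Submodule R V} (hU : U ≠ ⊤) (hW : W ≠ ⊤) (hUW : U ⊓ W ≠ ⊥) : U ≤ W ∨ W ≤ U := by
  by_contra! h
  refine not_colorable_two_of_triangle hU hW (ne_top_of_le_ne_top hU inf_le_left)
    (fun he => h.1 (he ▸ le_rfl)) (fun he => h.1 (inf_eq_left.mp he.symm))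
    (fun he => h.2 (inf_eq_right.mp he.symm)) hUW ?_ ?_ hc
  · rwa [← inf_assoc, inf_idem]
  · rwa [inf_left_comm, inf_idem]

theorem length_le_three_of_colorable_two (hc : (intersectionGraph R V).Colorable 2) :
    Module.length R V ≤ 3 := by
  by_contra! h
  obtain ⟨p, -, hlen⟩ := exists_series_of_le_height (⊤ : Submodule R V) (n := 4)
    (Module.length_eq_height R V ▸ Order.add_one_le_of_lt h)
  have hp (i : ℕ) (hi : i < 4) : p ⟨i, by omega⟩ < p ⟨i + 1, by omega⟩ := p.step ⟨i, by omega⟩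
  refine not_colorable_two_of_lt_of_lt (bot_le.trans_lt (hp 0 (by norm_num))) (hp 1 (by norm_num))
    (hp 2 (by norm_num)) ((hp 3 (by norm_num)).trans_le le_top) hc

theorem existsUnique_isCoatom_of_colorable_two (hc : (intersectionGraph R V).Colorable 2)
    (hlen : Module.length R V = 3) : ∃! M : Submodule R V, IsCoatom M := by
  have := isNoetherian_of_length_ne_top (R := R) (V := V) (by simp [hlen])
  have : Nontrivial V := Module.length_pos_iff (R := R).mp (by simp [hlen])
  obtain ⟨M, hM⟩ := IsCoatomic.exists_coatom (α := Submodule R V)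
  refine ⟨M, hM, fun N hN => by_contra fun hNM => ?_⟩
  have hcov : N ⊓ M ⋖ M := inf_covBy_of_covBy_sup_left (hN.sup_eq_top_of_ne hM hNM ▸ hN.covBy_top)
  rcases eq_or_ne (N ⊓ M) ⊥ with h | h
  · have := hasCompositionSeriesOfLength_of_isChain (l := [M]) (by simp [← h, hcov, hM.covBy_top])
    rw [hasCompositionSeriesOfLength_iff, hlen] at this
    norm_num at this
  · rcases le_or_le_of_colorable_two hc hN.1 hM.1 h with hle | hle
    · exact hNM ((hN.le_iff_eq hM.1).mp hle).symm
    · exact hNM ((hM.le_iff_eq hN.1).mp hle)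

theorem isAtom_of_length_eq_three {M U : Submodule R V} (hlen : Module.length R V = 3)
    (hM : ∀ N : Submodule R V, IsCoatom N → N = M) (hU : U ≠ ⊥) (hUtop : U ≠ ⊤) (hUM : U ≠ M) :
    IsAtom U := by
  have := isNoetherian_of_length_ne_top (R := R) (V := V) (by simp [hlen])
  obtain ⟨N, hN, hUN⟩ := (eq_top_or_exists_le_coatom U).resolve_left hUtop
  obtain rfl := hM N hN
  refine ⟨hU, fun X hXU => by_contra fun hX => ?_⟩
  have := le_length_of_isChain (l := [X, U, N])
    (by simp [bot_lt_iff_ne_bot.mpr hX, hXU, lt_of_le_of_ne hUN hUM, hN.lt_top])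
  rw [hlen] at this
  norm_num at this

theorem three_le_length_of_adj {U W : ProperSubmodule R V} (h : (intersectionGraph R V).Adj U W) :
    3 ≤ Module.length R V := by
  obtain ⟨hUW, hUW₀⟩ := intersectionGraph_adj.mp h
  by_cases hle : U.1 ≤ W.1
  · simpa using le_length_of_isChain (l := [U.1, W.1]) (by
      simp [bot_lt_iff_ne_bot.mpr U.2.1, lt_of_le_of_ne hle hUW, lt_top_iff_ne_top.mpr W.2.2])
  · simpa using le_length_of_isChain (l := [U.1 ⊓ W.1, U.1]) (by
      simp [bot_lt_iff_ne_bot.mpr hUW₀, inf_lt_left.mpr hle, lt_top_iff_ne_top.mpr U.2.2])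

theorem colorable_two_of_length_le_two (hlen : Module.length R V ≤ 2) :
    (intersectionGraph R V).Colorable 2 :=
  ⟨Coloring.mk (fun _ => 0) fun h => absurd ((three_le_length_of_adj h).trans hlen) (by norm_num)⟩

theorem colorable_two_of_length_eq_three (hlen : Module.length R V = 3)
    (hM : ∃! M : Submodule R V, IsCoatom M) : (intersectionGraph R V).Colorable 2 := by
  classical
  obtain ⟨M, -, hM⟩ := hM
  refine ⟨Coloring.mk (fun W => if W.1 = M then 0 else 1) fun {U W} hUW => ?_⟩
  obtain ⟨hne, hmeet⟩ := intersectionGraph_adj.mp hUW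
  have isAtom_of_ne {X : ProperSubmodule R V} (hX : X.1 ≠ M) : IsAtom X.1 :=
    isAtom_of_length_eq_three hlen hM X.2.1 X.2.2 hX
  split_ifs with hU hW hW
  · exact absurd (hU.trans hW.symm) hne
  · simp
  · simp
  · exact absurd ((isAtom_of_ne hU).disjoint_of_ne (isAtom_of_ne hW) hne).eq_bot hmeet

end

theorem stmt9 (R V : Type*) [Ring R] [AddCommGroup V] [Module R V] :
    (intersectionGraph R V).Colorable 2 ↔
      ((∃ n ≤ 2, HasCompositionSeriesOfLength R V n) ∨
        (HasCompositionSeriesOfLength R V 3 ∧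
          ∃! M : Submodule R V, IsCoatom M)) := by
  simp only [hasCompositionSeriesOfLength_iff]
  constructor
  · intro hc
    have hle := length_le_three_of_colorable_two hc
    obtain ⟨n, hn⟩ := ENat.ne_top_iff_exists.mp (ne_top_of_le_ne_top (by decide) hle)
    rw [← hn] at hle ⊢
    rcases (show n ≤ 2 ∨ n = 3 by norm_cast at hle; omega) with h | rfl
    · exact .inl ⟨n, h, rfl⟩
    · exact .inr ⟨rfl, existsUnique_isCoatom_of_colorable_two hc hn.symm⟩
  · rintro (⟨n, hn, hlen⟩ | ⟨hlen, hM⟩)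
    · exact colorable_two_of_length_le_two (hlen ▸ by exact_mod_cast hn)
    · exact colorable_two_of_length_eq_three hlen hM
end

section
/- Suppose V is not a simple R-module. Then the domination number of G(V) equals 1 if and only if V is not semisimple. -/
/-- A dominating set for the intersection graph: every vertex outside `D` is
adjacent to some vertex of `D`. -/
def IsDominatingSet (R V : Type*) [Ring R] [AddCommGroup V] [Module R V]
    (D : Set (ProperSubmodule R V)) : Prop :=
  ∀ v ∉ D, ∃ w ∈ D, (intersectionGraph R V).Adj v w

/-- The domination number: the smallest cardinality of a dominating set. -/
noncomputable def dominationNumber (R V : Type*) [Ring R] [AddCommGroup V] [Module R V] :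
    Cardinal :=
  sInf {c : Cardinal | ∃ D : Set (ProperSubmodule R V),
    IsDominatingSet R V D ∧ Cardinal.mk D = c}

/-!
A single proper submodule `E` dominates the intersection graph exactly when it is essential,
i.e. meets every nonzero submodule. If `V` is semisimple, a complement of `E` is disjoint from
it, so no proper submodule is essential. Conversely, if some submodule `W` has no complement,
take `m` maximal among the submodules disjoint from `W` (Zorn); by modularity `W ⊔ m` is
essential, and it is proper because otherwise `m` would complement `W`.
-/

def IsEssential {α : Type*} [Lattice α] [OrderBot α] (e : α) : Prop :=
  ∀ ⦃b⦄, Disjoint b e → b = ⊥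

section Lattice

variable {α : Type*}

theorem IsEssential.ne_bot_of_ne_top [Lattice α] [BoundedOrder α] {e : α}
    (he : IsEssential e) (hne : e ≠ ⊤) : e ≠ ⊥ := by
  rintro rfl
  exact hne (he (b := ⊤) disjoint_bot_right).symm

theorem IsEssential.eq_top [Lattice α] [BoundedOrder α] [ComplementedLattice α] {e : α}
    (he : IsEssential e) : e = ⊤ := by
  obtain ⟨c, hc⟩ := exists_isCompl e
  simpa [he hc.disjoint.symm] using hc.codisjoint.eq_top

variable [CompleteLattice α]

theorem exists_maximal_disjoint [IsCompactlyGenerated α] (a : α) :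
    ∃ m, Maximal (Disjoint a) m := by
  obtain ⟨m, -, hm⟩ := zorn_le_nonempty₀ {b | Disjoint a b} (fun c hc hchain _ _ =>
    ⟨sSup c, (hchain.directedOn.disjoint_sSup_right (s := c)).2 hc,
      fun _ => le_sSup⟩) ⊥ disjoint_bot_right
  exact ⟨m, hm⟩

theorem Maximal.isEssential_sup [IsModularLattice α] {a m : α}
    (hm : Maximal (Disjoint a) m) : IsEssential (a ⊔ m) := by
  intro b hb
  have hab : Disjoint a (m ⊔ b) := hm.prop.disjoint_sup_right_of_disjoint_sup_left hb.symm
  have hbm : b ≤ m := le_sup_right.trans (hm.le_of_ge hab le_sup_left)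
  exact hb.eq_bot_of_le (hbm.trans le_sup_right)

theorem complementedLattice_iff_forall_isEssential_eq_top [IsModularLattice α]
    [IsCompactlyGenerated α] : ComplementedLattice α ↔ ∀ e : α, IsEssential e → e = ⊤ := by
  refine ⟨fun _ e he => he.eq_top, fun h => ⟨fun a => ?_⟩⟩
  obtain ⟨m, hm⟩ := exists_maximal_disjoint a
  exact ⟨m, hm.prop, codisjoint_iff.2 (h _ hm.isEssential_sup)⟩

end Lattice

section IntersectionGraph

variable {R V : Type*} [Ring R] [AddCommGroup V] [Module R V]

theorem isDominatingSet_empty_iff :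
    IsDominatingSet R V ∅ ↔ IsEmpty (ProperSubmodule R V) := by
  simp [IsDominatingSet, isEmpty_iff]

theorem isDominatingSet_singleton_iff (e : ProperSubmodule R V) :
    IsDominatingSet R V {e} ↔ IsEssential e.1 := by
  constructor
  · intro hD W hW
    by_contra hWbot
    have hWtop : W ≠ ⊤ := by
      rintro rfl
      exact e.2.1 (top_disjoint.1 hW)
    by_cases hWe : (⟨W, hWbot, hWtop⟩ : ProperSubmodule R V) = e
    · subst hWe
      exact hWbot (disjoint_self.1 hW)
    · obtain ⟨_, rfl, -, hmeet⟩ := hD _ hWe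
      exact hmeet (disjoint_iff.1 hW)
  · intro he v hv
    exact ⟨e, rfl, hv, fun hmeet => v.2.1 (he (disjoint_iff.2 hmeet))⟩

theorem exists_isDominatingSet_singleton_iff :
    (∃ e, IsDominatingSet R V {e}) ↔ ∃ E : Submodule R V, IsEssential E ∧ E ≠ ⊤ := by
  simp_rw [isDominatingSet_singleton_iff]
  constructor
  · rintro ⟨e, he⟩
    exact ⟨e.1, he, e.2.2⟩
  · rintro ⟨E, hE, hEtop⟩
    exact ⟨⟨E, hE.ne_bot_of_ne_top hEtop, hEtop⟩, hE⟩

theorem dominationNumber_eq_one_iff :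
    dominationNumber R V = 1 ↔ ∃ e, IsDominatingSet R V {e} := by
  set S := {c : Cardinal | ∃ D : Set (ProperSubmodule R V),
    IsDominatingSet R V D ∧ Cardinal.mk D = c}
  constructor
  · intro h
    have hS : S.Nonempty :=
      Set.nonempty_iff_ne_empty.2 fun hS => by simp [dominationNumber, S, hS] at h
    obtain ⟨D, hD, hcard⟩ : (1 : Cardinal) ∈ S := h ▸ csInf_mem hS
    obtain ⟨e, rfl⟩ := Cardinal.mk_set_eq_one_iff.1 hcard
    exact ⟨e, hD⟩
  · rintro ⟨e, he⟩
    have hone : (1 : Cardinal) ∈ S := ⟨{e}, he, Cardinal.mk_singleton e⟩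
    refine le_antisymm (csInf_le' hone) (le_csInf ⟨1, hone⟩ ?_)
    rintro _ ⟨D, hD, rfl⟩
    rw [Cardinal.one_le_iff_ne_zero, Ne, Cardinal.mk_set_eq_zero_iff]
    rintro rfl
    exact (isDominatingSet_empty_iff.1 hD).elim e

end IntersectionGraph

theorem stmt11_general (R V : Type*) [Ring R] [AddCommGroup V] [Module R V] :
    dominationNumber R V = 1 ↔ ¬ IsSemisimpleModule R V := by
  rw [dominationNumber_eq_one_iff, exists_isDominatingSet_singleton_iff,
    isSemisimpleModule_iff, complementedLattice_iff_forall_isEssential_eq_top]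
  push Not
  rfl

theorem stmt11 (R V : Type*) [Ring R] [AddCommGroup V] [Module R V]
    (hV : ¬ IsSimpleModule R V) :
    dominationNumber R V = 1 ↔ ¬ IsSemisimpleModule R V :=
  stmt11_general R V
end
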